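/- Let λ_max ≥ λ₀ > λ > 0 and let j ∈ {1,…,p}. If either (a) Px̄^j = 0, or (b) sup_{θ ∈ A} |⟨θ, x̄^j⟩| < mλ, then every minimizer (β, c) ∈ ℝ^p × ℝ of LRP_λ satisfies β_j = 0. -/

import Mathlib

/-- The dual objective `g(θ) = (1/m) Σ_i [θ_i log θ_i + (1−θ_i) log(1−θ_i)]`. -/
noncomputable def g (m : ℕ) (θ : Fin m → ℝ) : ℝ :=
  (1 / (m : ℝ)) * ∑ i, (θ i * Real.log (θ i) + (1 - θ i) * Real.log (1 - θ i))

/-- The gradient of `g`, componentwise `(1/m) log(θ_i/(1−θ_i))`. -/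
noncomputable def gradg (m : ℕ) (θ : Fin m → ℝ) : Fin m → ℝ :=
  fun i => (1 / (m : ℝ)) * Real.log (θ i / (1 - θ i))
/-- The dual feasible set `F_λ`: componentwise in `(0,1)`, `|⟨θ, x̄^j⟩| ≤ mλ` for all
columns `x̄^j = X j`, and `⟨θ, b⟩ = 0`. -/
def Feas (m p : ℕ) (X : Fin p → Fin m → ℝ) (b : Fin m → ℝ) (lam : ℝ) :
    Set (Fin m → ℝ) :=
  {θ | (∀ i, 0 < θ i ∧ θ i < 1) ∧ (∀ j, |∑ i, θ i * X j i| ≤ (m : ℝ) * lam) ∧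
    ∑ i, θ i * b i = 0}
open scoped Classical in
/-- `m⁺ = #{i : b_i = 1}`. -/
noncomputable def mPlus (m : ℕ) (b : Fin m → ℝ) : ℕ :=
  (Finset.univ.filter (fun i => b i = 1)).card

open scoped Classical in
/-- `m⁻ = #{i : b_i = −1}`. -/
noncomputable def mMinus (m : ℕ) (b : Fin m → ℝ) : ℕ :=
  (Finset.univ.filter (fun i => b i = -1)).card

open scoped Classical in
/-- `θ_max`, with `(θ_max)_i = m⁻/m` if `b_i = 1` and `m⁺/m` if `b_i = −1`. -/
noncomputable def thetaMax (m : ℕ) (b : Fin m → ℝ) : Fin m → ℝ :=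
  fun i => if b i = 1 then (mMinus m b : ℝ) / m else (mPlus m b : ℝ) / m

/-- `λ_max = (1/m) max_j |⟨θ_max, x̄^j⟩|`. -/
noncomputable def lamMax (m p : ℕ) (X : Fin p → Fin m → ℝ) (b : Fin m → ℝ) : ℝ :=
  (1 / (m : ℝ)) * ⨆ j : Fin p, |∑ i, thetaMax m b i * X j i|
/-- `P`, the orthogonal projection onto the orthogonal complement of `b`:
`Pv = v − (⟨v,b⟩/‖b‖₂²) b`. -/
noncomputable def Pb (m : ℕ) (b : Fin m → ℝ) (v : Fin m → ℝ) : Fin m → ℝ :=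
  fun i => v i - ((∑ k, v k * b k) / (∑ k, (b k) ^ 2)) * b i
/-- The ℓ1-regularized logistic regression objective `LRP_λ`:
`(1/m) Σ_i log(1 + exp(−⟨β, x̄_i⟩ − b_i c)) + λ‖β‖₁`, where the rows are
`(x̄_i)_j = X j i`. -/
noncomputable def LRP (m p : ℕ) (X : Fin p → Fin m → ℝ) (b : Fin m → ℝ) (lam : ℝ)
    (β : Fin p → ℝ) (c : ℝ) : ℝ :=
  (1 / (m : ℝ)) * ∑ i, Real.log (1 + Real.exp (-(∑ j, β j * X j i) - b i * c))
    + lam * ∑ j, |β j|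

/-! If `P x̄^j = 0`, then `x̄^j` is a multiple of `b`, so `β_j x̄^j` can be moved into the
intercept without changing the loss, while the penalty drops by `λ |β_j|`.

Otherwise, the optimality conditions of `LRP_λ` at `(β, c)` say that
`θ_i = σ(-⟨β, x̄_i⟩ - b_i c)` lies in `F_λ`, minimizes `g` there, and satisfies
`β_j ⟨θ, x̄^j⟩ = mλ |β_j|` for every `j`. The binary entropy has curvature at least `4`, so `g`
is strongly convex; comparing `θ` with the feasible point `(λ/λ₀) θ₀`, and using the first-order
optimality of `θ₀` in the direction `(λ₀/λ) θ - θ₀`, puts `θ` in the ball of radius `r` around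
`θ₀`. Together with `⟨θ, x̄*⟩ ≤ |⟨θ, x̄^{j₀}⟩| ≤ mλ` this gives `θ ∈ A`, hence
`|⟨θ, x̄^j⟩| < mλ`, which forces `β_j = 0`. -/

open Real Set Filter Topology

lemma ConcaveOn.le_add_mul_sub_of_hasDerivAt {S : Set ℝ} {f : ℝ → ℝ} {x y f' : ℝ}
    (hf : ConcaveOn ℝ S f) (hx : x ∈ S) (hy : y ∈ S) (hf' : HasDerivAt f f' x) :
    f y ≤ f x + f' * (y - x) := by
  rcases lt_trichotomy x y with hxy | rfl | hyx
  · have := hf.slope_le_of_hasDerivAt hx hy hxy hf'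
    rw [slope_def_field, div_le_iff₀ (sub_pos.2 hxy)] at this
    linarith
  · simp
  · have := hf.le_slope_of_hasDerivAt hy hx hyx hf'
    rw [slope_def_field, le_div_iff₀ (sub_pos.2 hyx)] at this
    linarith

lemma HasDerivAt.nonneg_of_eventually_le {f : ℝ → ℝ} {f' x : ℝ} (hf : HasDerivAt f f' x)
    (hmin : ∀ᶠ t in 𝓝[>] x, f x ≤ f t) : 0 ≤ f' := by
  have hslope : Tendsto (slope f x) (𝓝[>] x) (𝓝 f') :=
    (hasDerivAt_iff_tendsto_slope.mp hf).mono_left (nhdsWithin_mono x fun _ h ↦ ne_of_gt h)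
  refine ge_of_tendsto hslope ?_
  filter_upwards [hmin, self_mem_nhdsWithin] with t ht hxt
  rw [slope_def_field]
  exact div_nonneg (sub_nonneg.2 ht) (sub_nonneg.2 (le_of_lt hxt))

lemma hasDerivAt_binEntropy_add_two_mul_sq {p : ℝ} (hp : p ∈ Ioo 0 1) :
    HasDerivAt (fun q ↦ binEntropy q + 2 * q ^ 2) (log (1 - p) - log p + 4 * p) p := by
  refine ((hasDerivAt_binEntropy hp.1.ne' hp.2.ne).fun_add
    ((hasDerivAt_pow 2 p).const_mul 2)).congr_deriv ?_
  push_cast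
  ring

lemma concaveOn_binEntropy_add_two_mul_sq :
    ConcaveOn ℝ (Ioo 0 1) (fun p ↦ binEntropy p + 2 * p ^ 2) := by
  refine concaveOn_of_hasDerivWithinAt2_nonpos (convex_Ioo 0 1)
    (f' := fun p ↦ log (1 - p) - log p + 4 * p)
    (f'' := fun p ↦ -(1 - p)⁻¹ - p⁻¹ + 4) ?_ ?_ ?_ ?_
  · exact (binEntropy_continuous.add (by fun_prop)).continuousOn
  · rw [interior_Ioo]
    exact fun p hp ↦ (hasDerivAt_binEntropy_add_two_mul_sq hp).hasDerivWithinAt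
  · rw [interior_Ioo]
    rintro p ⟨hp₀, hp₁⟩
    refine HasDerivAt.hasDerivWithinAt ?_
    have h₁ : HasDerivAt (fun q ↦ log (1 - q)) ((0 - 1) / (1 - p)) p :=
      ((hasDerivAt_const p 1).fun_sub (hasDerivAt_id' p)).log (by linarith)
    refine ((h₁.fun_sub (hasDerivAt_log hp₀.ne')).fun_add
      ((hasDerivAt_id' p).const_mul 4)).congr_deriv ?_
    ring
  · rw [interior_Ioo]
    rintro p ⟨hp₀, hp₁⟩
    have hq : 0 < 1 - p := by linarith
    have : 4 ≤ (1 - p)⁻¹ + p⁻¹ := by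
      rw [inv_add_inv hq.ne' hp₀.ne', le_div_iff₀ (by positivity)]
      nlinarith [sq_nonneg (2 * p - 1)]
    linarith

lemma binEntropy_le_add_mul_sub_sub_two_mul_sq {s t : ℝ} (hs : s ∈ Ioo 0 1) (ht : t ∈ Ioo 0 1) :
    binEntropy t ≤ binEntropy s + (log (1 - s) - log s) * (t - s) - 2 * (t - s) ^ 2 := by
  have := concaveOn_binEntropy_add_two_mul_sq.le_add_mul_sub_of_hasDerivAt hs ht
    (hasDerivAt_binEntropy_add_two_mul_sq hs)
  linear_combination this

lemma g_eq_sum_binEntropy (m : ℕ) (θ : Fin m → ℝ) : g m θ = ∑ i, -binEntropy (θ i) / m := by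
  rw [g, Finset.mul_sum]
  refine Finset.sum_congr rfl fun i _ ↦ ?_
  rw [binEntropy, log_inv, log_inv]
  ring

lemma gradg_eq_of_mem_Ioo {m : ℕ} {θ : Fin m → ℝ} {i : Fin m} (hθ : θ i ∈ Ioo 0 1) :
    gradg m θ i = -(log (1 - θ i) - log (θ i)) / m := by
  rw [gradg, log_div hθ.1.ne' (sub_pos.2 hθ.2).ne']
  ring

lemma g_add_sum_gradg_mul_add_le {m : ℕ} {θ η : Fin m → ℝ} (hθ : ∀ i, θ i ∈ Ioo 0 1)
    (hη : ∀ i, η i ∈ Ioo 0 1) :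
    g m η + ∑ i, gradg m η i * (θ i - η i) + 2 / m * ∑ i, (θ i - η i) ^ 2 ≤ g m θ := by
  rw [g_eq_sum_binEntropy, g_eq_sum_binEntropy, Finset.mul_sum, ← Finset.sum_add_distrib,
    ← Finset.sum_add_distrib]
  refine Finset.sum_le_sum fun i _ ↦ ?_
  have := div_le_div_of_nonneg_right
    (binEntropy_le_add_mul_sub_sub_two_mul_sq (hη i) (hθ i)) (Nat.cast_nonneg m)
  rw [gradg_eq_of_mem_Ioo (hη i)]
  linear_combination this

lemma hasDerivAt_g_add_mul {m : ℕ} {θ : Fin m → ℝ} (hθ : ∀ i, θ i ∈ Ioo 0 1) (d : Fin m → ℝ) :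
    HasDerivAt (fun t ↦ g m (fun i ↦ θ i + t * d i)) (∑ i, gradg m θ i * d i) 0 := by
  simp only [g_eq_sum_binEntropy]
  refine HasDerivAt.fun_sum fun i _ ↦ ?_
  have hline : HasDerivAt (fun t ↦ θ i + t * d i) (d i) 0 := by
    simpa using (hasDerivAt_mul_const (d i)).const_add (θ i)
  have hθ' : θ i + 0 * d i ∈ Ioo 0 1 := by simpa using hθ i
  refine (((hasDerivAt_binEntropy hθ'.1.ne' hθ'.2.ne).comp 0 hline).neg.div_const
    (m : ℝ)).congr_deriv ?_
  rw [gradg_eq_of_mem_Ioo (hθ i), zero_mul, add_zero]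
  ring

lemma log_sigmoid_div_one_sub_sigmoid (x : ℝ) : log (sigmoid x / (1 - sigmoid x)) = x := by
  rw [← sigmoid_neg, ← sigmoid_mul_rexp_neg, div_mul_cancel_left₀ (sigmoid_pos x).ne', log_inv,
    log_exp, neg_neg]

lemma hasDerivAt_log_one_add_exp (x : ℝ) :
    HasDerivAt (fun y ↦ log (1 + exp y)) (sigmoid x) x := by
  refine (((hasDerivAt_exp x).const_add 1).log (by positivity)).congr_deriv ?_
  rw [sigmoid_def, exp_neg]
  field_simp
  ring

lemma hasDerivAt_sum_log_one_add_exp_sub_mul {ι : Type*} [Fintype ι] (a v : ι → ℝ) :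
    HasDerivAt (fun t ↦ ∑ i, log (1 + exp (a i - t * v i))) (-∑ i, sigmoid (a i) * v i) 0 := by
  rw [← Finset.sum_neg_distrib]
  refine HasDerivAt.fun_sum fun i _ ↦ ?_
  have hline : HasDerivAt (fun t ↦ a i - t * v i) (-v i) 0 := by
    simpa using (hasDerivAt_mul_const (v i)).const_sub (a i)
  refine ((hasDerivAt_log_one_add_exp (a i - 0 * v i)).comp 0 hline).congr_deriv ?_
  simp

lemma Fintype.sum_apply_update {ι α : Type*} [Fintype ι] [DecidableEq ι] (F : ι → α → ℝ)
    (f : ι → α) (j : ι) (s : α) :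
    ∑ k, F k (Function.update f j s k) = ∑ k, F k (f k) + (F j s - F j (f j)) := by
  simp_rw [Function.apply_update F f j s]
  rw [Finset.sum_update_of_mem (Finset.mem_univ j),
    Finset.sum_eq_add_sum_sdiff_singleton_of_mem (Finset.mem_univ j) (fun k ↦ F k (f k))]
  ring

lemma sum_const_mul_mul {ι : Type*} [Fintype ι] (κ : ℝ) (θ x : ι → ℝ) :
    ∑ i, κ * θ i * x i = κ * ∑ i, θ i * x i := by
  simp_rw [mul_assoc, ← Finset.mul_sum]

lemma sum_add_mul_sub_mul {ι : Type*} [Fintype ι] (θ₀ θ x : ι → ℝ) (t : ℝ) :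
    ∑ i, (θ₀ i + t * (θ i - θ₀ i)) * x i =
      (1 - t) * ∑ i, θ₀ i * x i + t * ∑ i, θ i * x i := by
  rw [Finset.mul_sum, Finset.mul_sum, ← Finset.sum_add_distrib]
  exact Finset.sum_congr rfl fun i _ ↦ by ring

lemma abs_sum_mul_le_add_sqrt {ι : Type*} [Fintype ι] {θ θ₀ : ι → ℝ} {R : ℝ}
    (hθ : ∑ i, (θ i - θ₀ i) ^ 2 ≤ R) (x : ι → ℝ) :
    |∑ i, θ i * x i| ≤ |∑ i, θ₀ i * x i| + √(R * ∑ i, x i ^ 2) := by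
  have hsplit : ∑ i, θ i * x i = ∑ i, θ₀ i * x i + ∑ i, (θ i - θ₀ i) * x i := by
    rw [← Finset.sum_add_distrib]
    exact Finset.sum_congr rfl fun i _ ↦ by ring
  have hcs : |∑ i, (θ i - θ₀ i) * x i| ≤ √(R * ∑ i, x i ^ 2) := by
    refine abs_le_sqrt ((Finset.sum_mul_sq_le_sq_mul_sq _ _ _).trans ?_)
    exact mul_le_mul_of_nonneg_right hθ (Finset.sum_nonneg fun i _ ↦ sq_nonneg _)
  rw [hsplit]
  exact (abs_add_le _ _).trans (add_le_add_right hcs _)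

lemma bddAbove_image_abs_sum_mul {ι : Type*} [Fintype ι] {A : Set (ι → ℝ)} {θ₀ : ι → ℝ}
    {R : ℝ} (hA : ∀ θ ∈ A, ∑ i, (θ i - θ₀ i) ^ 2 ≤ R) (x : ι → ℝ) :
    BddAbove ((fun θ ↦ |∑ i, θ i * x i|) '' A) :=
  ⟨_, forall_mem_image.2 fun θ hθ ↦ abs_sum_mul_le_add_sqrt (hA θ hθ) x⟩

lemma sum_mul_sign_mul_le_abs {ι : Type*} [Fintype ι] (θ x : ι → ℝ) (s : ℝ) :
    ∑ i, θ i * (Real.sign s * x i) ≤ |∑ i, θ i * x i| := by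
  have : ∑ i, θ i * (Real.sign s * x i) = Real.sign s * ∑ i, θ i * x i := by
    rw [Finset.mul_sum]
    exact Finset.sum_congr rfl fun i _ ↦ by ring
  rw [this]
  rcases Real.sign_apply_eq s with h | h | h <;> simp [h, neg_le_abs, le_abs_self]

lemma eq_zero_of_mul_eq_abs_mul_of_abs_lt {a M L : ℝ} (h : a * M = |a| * L) (hM : |M| < L) :
    a = 0 := by
  by_contra ha
  have habs := congrArg abs h
  rw [abs_mul, abs_mul, abs_abs, abs_of_pos ((abs_nonneg M).trans_lt hM)] at habs
  exact hM.ne (mul_left_cancel₀ (abs_ne_zero.2 ha) habs)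

lemma abs_le_and_mul_eq_of_forall_le_add_abs {S : ℝ → ℝ} {S' a lam : ℝ} (hlam : 0 ≤ lam)
    (hS : HasDerivAt S S' 0) (hmin : ∀ t, S 0 + lam * |a| ≤ S t + lam * |a + t|) :
    |S'| ≤ lam ∧ a * S' = -(lam * |a|) := by
  have hright : 0 ≤ S' + lam * 1 := by
    refine (hS.fun_add ((hasDerivAt_id' 0).const_mul lam)).nonneg_of_eventually_le ?_
    filter_upwards [self_mem_nhdsWithin] with t (ht : 0 < t)
    have := mul_le_mul_of_nonneg_left ((abs_add_le a t).trans_eq (by rw [abs_of_pos ht])) hlam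
    linarith [hmin t]
  have hleft : 0 ≤ S' * -1 + lam * 1 := by
    have hS' : HasDerivAt S S' (-0) := by rwa [neg_zero]
    refine ((hS'.comp 0 (hasDerivAt_neg 0)).fun_add
      ((hasDerivAt_id' 0).const_mul lam)).nonneg_of_eventually_le ?_
    filter_upwards [self_mem_nhdsWithin] with t (ht : 0 < t)
    have := mul_le_mul_of_nonneg_left ((abs_sub a t).trans_eq (by rw [abs_of_pos ht])) hlam
    have h := hmin (-t)
    rw [← sub_eq_add_neg] at h
    simp only [Function.comp, neg_zero, mul_zero, add_zero]
    linarith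
  refine ⟨abs_le.2 ⟨by linarith, by linarith⟩, ?_⟩
  -- Along the ray `s ↦ (1 + s) a` the penalty `|a + s a|` is linear near `s = 0`.
  have hS₀ : HasDerivAt S S' (0 * a) := by rwa [zero_mul]
  have hray := (hS₀.comp 0 (hasDerivAt_mul_const a)).fun_add
    ((hasDerivAt_id' 0).const_mul (lam * |a|))
  have hlocal : IsLocalMin (fun s ↦ S (s * a) + lam * |a| * s) 0 := by
    filter_upwards [eventually_gt_nhds (show (-1 : ℝ) < 0 by norm_num)] with s hs
    have habs : |a + s * a| = |a| * (1 + s) := by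
      rw [show a + s * a = a * (1 + s) by ring, abs_mul,
        abs_of_pos (show (0 : ℝ) < 1 + s by linarith)]
    have := hmin (s * a)
    rw [habs] at this
    simp only [zero_mul, mul_zero, add_zero]
    linarith
  have := hlocal.hasDerivAt_eq_zero hray
  linarith

section LogisticRegression

variable {m p : ℕ} (X : Fin p → Fin m → ℝ) (b : Fin m → ℝ)

-- At a minimizer `(β, c)` of `LRP_λ` this is `θ*_λ`, by `isMinOn_g_dualPoint`.
noncomputable def dualPoint (β : Fin p → ℝ) (c : ℝ) : Fin m → ℝ :=
  fun i ↦ sigmoid (-(∑ j, β j * X j i) - b i * c)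

lemma sum_update_mul (β : Fin p → ℝ) (j : Fin p) (s : ℝ) (i : Fin m) :
    ∑ k, Function.update β j s k * X k i = ∑ k, β k * X k i + (s - β j) * X j i := by
  rw [Fintype.sum_apply_update (fun k y ↦ y * X k i)]
  ring

lemma sum_abs_update (β : Fin p → ℝ) (j : Fin p) (s : ℝ) :
    ∑ k, |Function.update β j s k| = ∑ k, |β k| + (|s| - |β j|) :=
  Fintype.sum_apply_update (fun _ y ↦ |y|) β j s

lemma sum_neg_margin_mul (β : Fin p → ℝ) (c : ℝ) (θ : Fin m → ℝ) :
    ∑ i, (-(∑ k, β k * X k i) - b i * c) * θ i =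
      -∑ k, β k * ∑ i, θ i * X k i - c * ∑ i, θ i * b i := by
  simp only [sub_mul, neg_mul, Finset.sum_sub_distrib, Finset.sum_neg_distrib, Finset.sum_mul,
    Finset.mul_sum]
  rw [Finset.sum_comm]
  congr 1
  · congr 1
    exact Finset.sum_congr rfl fun k _ ↦ Finset.sum_congr rfl fun i _ ↦ by ring
  · exact Finset.sum_congr rfl fun i _ ↦ by ring

variable {X b} {lam : ℝ} {β : Fin p → ℝ} {c : ℝ}

lemma sum_dualPoint_mul_eq_zero (hm : 0 < m)
    (hmin : ∀ β' c', LRP m p X b lam β c ≤ LRP m p X b lam β' c') :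
    ∑ i, dualPoint X b β c i * b i = 0 := by
  have hderiv : HasDerivAt (fun t ↦ LRP m p X b lam β (c + t))
      (1 / m * -∑ i, dualPoint X b β c i * b i) 0 := by
    refine (((hasDerivAt_sum_log_one_add_exp_sub_mul _ b).const_mul (1 / (m : ℝ))).add_const
      (lam * ∑ k, |β k|)).congr_of_eventuallyEq (Eventually.of_forall fun t ↦ ?_)
    simp only [LRP]
    congr 2
    exact Finset.sum_congr rfl fun i _ ↦ by ring_nf
  have hlocal : IsLocalMin (fun t ↦ LRP m p X b lam β (c + t)) 0 :=
    Eventually.of_forall fun t ↦ by simpa using hmin β (c + t)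
  have := hlocal.hasDerivAt_eq_zero hderiv
  simpa [hm.ne'] using this

lemma dualPoint_kkt (hm : 0 < m) (hlam : 0 ≤ lam)
    (hmin : ∀ β' c', LRP m p X b lam β c ≤ LRP m p X b lam β' c') (j : Fin p) :
    |∑ i, dualPoint X b β c i * X j i| ≤ m * lam ∧
      β j * ∑ i, dualPoint X b β c i * X j i = |β j| * (m * lam) := by
  set S : ℝ → ℝ :=
    fun t ↦ 1 / (m : ℝ) * ∑ i, log (1 + exp ((-(∑ k, β k * X k i) - b i * c) - t * X j i))
  have hS : HasDerivAt S (1 / m * -∑ i, dualPoint X b β c i * X j i) 0 :=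
    (hasDerivAt_sum_log_one_add_exp_sub_mul _ (X j)).const_mul _
  have hLRP : ∀ t, LRP m p X b lam (Function.update β j (β j + t)) c =
      S t + lam * (∑ k, |β k| - |β j|) + lam * |β j + t| := by
    intro t
    have hmargin : ∀ i, -(∑ k, Function.update β j (β j + t) k * X k i) - b i * c =
        (-(∑ k, β k * X k i) - b i * c) - t * X j i := fun i ↦ by
      rw [sum_update_mul]
      ring
    simp only [LRP, S, hmargin, sum_abs_update]
    ring
  have hLRP₀ := hLRP 0
  rw [add_zero, Function.update_eq_self] at hLRP₀
  obtain ⟨habs, hmul⟩ := abs_le_and_mul_eq_of_forall_le_add_abs hlam hS fun t ↦ by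
    linarith [hmin (Function.update β j (β j + t)) c, hLRP t]
  have hm' : (0 : ℝ) < m := Nat.cast_pos.2 hm
  constructor
  · rw [abs_mul, abs_neg, abs_of_pos (by positivity), div_mul_eq_mul_div, one_mul,
      div_le_iff₀ hm'] at habs
    linarith
  · field_simp at hmul
    linarith

lemma dualPoint_mem_Feas (hm : 0 < m) (hlam : 0 ≤ lam)
    (hmin : ∀ β' c', LRP m p X b lam β c ≤ LRP m p X b lam β' c') :
    dualPoint X b β c ∈ Feas m p X b lam :=
  ⟨fun _ ↦ ⟨sigmoid_pos _, sigmoid_lt_one _⟩, fun j ↦ (dualPoint_kkt hm hlam hmin j).1,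
    sum_dualPoint_mul_eq_zero hm hmin⟩

lemma gradg_dualPoint (i : Fin m) :
    gradg m (dualPoint X b β c) i = (-(∑ k, β k * X k i) - b i * c) / m := by
  rw [gradg, dualPoint, log_sigmoid_div_one_sub_sigmoid]
  ring

lemma isMinOn_g_dualPoint (hm : 0 < m) (hlam : 0 ≤ lam)
    (hmin : ∀ β' c', LRP m p X b lam β c ≤ LRP m p X b lam β' c') :
    IsMinOn (g m) (Feas m p X b lam) (dualPoint X b β c) := by
  refine isMinOn_iff.2 fun θ ⟨hbox, hX, hb⟩ ↦ ?_
  have hsplit : ∑ i, gradg m (dualPoint X b β c) i * (θ i - dualPoint X b β c i) =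
      (∑ i, (-(∑ k, β k * X k i) - b i * c) * θ i -
        ∑ i, (-(∑ k, β k * X k i) - b i * c) * dualPoint X b β c i) / m := by
    rw [← Finset.sum_sub_distrib, Finset.sum_div]
    exact Finset.sum_congr rfl fun i _ ↦ by rw [gradg_dualPoint]; ring
  have hfirst : 0 ≤ ∑ i, gradg m (dualPoint X b β c) i * (θ i - dualPoint X b β c i) := by
    rw [hsplit, sum_neg_margin_mul, sum_neg_margin_mul, hb, sum_dualPoint_mul_eq_zero hm hmin]
    refine div_nonneg ?_ (Nat.cast_nonneg m)
    have : ∑ k, β k * ∑ i, θ i * X k i ≤ ∑ k, β k * ∑ i, dualPoint X b β c i * X k i :=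
      Finset.sum_le_sum fun k _ ↦ by
        rw [(dualPoint_kkt hm hlam hmin k).2]
        exact (le_abs_self _).trans ((abs_mul _ _).trans_le
          (mul_le_mul_of_nonneg_left (hX k) (abs_nonneg _)))
    linarith
  have := g_add_sum_gradg_mul_add_le hbox (dualPoint_mem_Feas hm hlam hmin).1
  have : 0 ≤ 2 / (m : ℝ) * ∑ i, (θ i - dualPoint X b β c i) ^ 2 := by positivity
  linarith

-- `θ` need not lie in the open box: a short step from `θ₀` towards it stays in `F_λ`.
lemma sum_gradg_mul_sub_nonneg {θ₀ θ : Fin m → ℝ} (hθ₀ : θ₀ ∈ Feas m p X b lam)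
    (hmin : IsMinOn (g m) (Feas m p X b lam) θ₀) (hθX : ∀ j, |∑ i, θ i * X j i| ≤ m * lam)
    (hθb : ∑ i, θ i * b i = 0) :
    0 ≤ ∑ i, gradg m θ₀ i * (θ i - θ₀ i) := by
  obtain ⟨hbox, hX, hb⟩ := hθ₀
  refine (hasDerivAt_g_add_mul hbox fun i ↦ θ i - θ₀ i).nonneg_of_eventually_le ?_
  have hbox_t : ∀ᶠ t in 𝓝 (0 : ℝ), ∀ i, θ₀ i + t * (θ i - θ₀ i) ∈ Ioo 0 1 :=
    eventually_all.2 fun i ↦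
      ((by fun_prop : Continuous fun t : ℝ ↦ θ₀ i + t * (θ i - θ₀ i)).tendsto' 0 (θ₀ i)
        (by simp)).eventually (isOpen_Ioo.mem_nhds (hbox i))
  filter_upwards [nhdsWithin_le_nhds hbox_t, nhdsWithin_le_nhds (eventually_lt_nhds one_pos),
    self_mem_nhdsWithin] with t hboxt ht₁ (ht₀ : 0 < t)
  simp only [zero_mul, add_zero]
  refine isMinOn_iff.1 hmin _ ⟨hboxt, fun j ↦ ?_, ?_⟩
  · rw [sum_add_mul_sub_mul]
    refine (abs_add_le _ _).trans ?_
    rw [abs_mul, abs_mul, abs_of_pos (sub_pos.2 ht₁), abs_of_pos ht₀]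
    nlinarith [hX j, hθX j]
  · rw [sum_add_mul_sub_mul, hb, hθb]
    ring

lemma mul_mem_Feas {θ : Fin m → ℝ} {κ : ℝ} (hθ : θ ∈ Feas m p X b lam) (hκ₀ : 0 < κ)
    (hκ₁ : κ ≤ 1) : (fun i ↦ κ * θ i) ∈ Feas m p X b (κ * lam) := by
  obtain ⟨hbox, hX, hb⟩ := hθ
  refine ⟨fun i ↦ ⟨mul_pos hκ₀ (hbox i).1, ?_⟩, fun j ↦ ?_, by rw [sum_const_mul_mul, hb, mul_zero]⟩
  · nlinarith [hbox i]
  · rw [sum_const_mul_mul, abs_mul, abs_of_pos hκ₀, mul_left_comm]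
    exact mul_le_mul_of_nonneg_left (hX j) hκ₀.le

lemma sum_sq_sub_le_of_isMinOn {lam₀ : ℝ} {θ₀ θ : Fin m → ℝ} (hm : 0 < m) (hlam : 0 < lam)
    (hll : lam ≤ lam₀) (hθ₀ : θ₀ ∈ Feas m p X b lam₀)
    (hθ₀min : IsMinOn (g m) (Feas m p X b lam₀) θ₀)
    (hθ : θ ∈ Feas m p X b lam) (hθmin : IsMinOn (g m) (Feas m p X b lam) θ) :
    ∑ i, (θ i - θ₀ i) ^ 2 ≤ m / 2 * (g m (fun i ↦ lam / lam₀ * θ₀ i) - g m θ₀ +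
      (1 - lam / lam₀) * ∑ i, gradg m θ₀ i * θ₀ i) := by
  have hlam₀ : 0 < lam₀ := hlam.trans_le hll
  have hscaled : g m θ ≤ g m (fun i ↦ lam / lam₀ * θ₀ i) := by
    refine isMinOn_iff.1 hθmin _ ?_
    simpa [div_mul_cancel₀ lam hlam₀.ne'] using
      mul_mem_Feas hθ₀ (div_pos hlam hlam₀) ((div_le_one hlam₀).2 hll)
  have hfirst : 0 ≤ ∑ i, gradg m θ₀ i * (lam₀ / lam * θ i - θ₀ i) := by
    refine sum_gradg_mul_sub_nonneg (θ := fun i ↦ lam₀ / lam * θ i) hθ₀ hθ₀min (fun j ↦ ?_) ?_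
    · rw [sum_const_mul_mul, abs_mul, abs_of_pos (div_pos hlam₀ hlam)]
      calc lam₀ / lam * |∑ i, θ i * X j i| ≤ lam₀ / lam * (m * lam) :=
            mul_le_mul_of_nonneg_left (hθ.2.1 j) (div_pos hlam₀ hlam).le
        _ = m * lam₀ := by field_simp
    · rw [sum_const_mul_mul, hθ.2.2, mul_zero]
  have hstrong := g_add_sum_gradg_mul_add_le hθ.1 hθ₀.1
  simp only [mul_sub, Finset.sum_sub_distrib, mul_left_comm _ (lam₀ / lam),
    ← Finset.mul_sum] at hfirst hstrong
  have hκ : lam / lam₀ * (lam₀ / lam) = 1 := by field_simp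
  have hdescent : lam / lam₀ * ∑ i, gradg m θ₀ i * θ₀ i ≤ ∑ i, gradg m θ₀ i * θ i := by
    linear_combination lam / lam₀ * hfirst + (∑ i, gradg m θ₀ i * θ i) * hκ
  have hm' : (0 : ℝ) < m := Nat.cast_pos.2 hm
  calc ∑ i, (θ i - θ₀ i) ^ 2 = m / 2 * (2 / m * ∑ i, (θ i - θ₀ i) ^ 2) := by field_simp
    _ ≤ _ := by gcongr; linarith

lemma eq_zero_of_Pb_eq_zero (hlam : 0 < lam) {j : Fin p} (hP : Pb m b (X j) = 0)
    (hmin : ∀ β' c', LRP m p X b lam β c ≤ LRP m p X b lam β' c') :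
    β j = 0 := by
  set τ := (∑ k, X j k * b k) / ∑ k, b k ^ 2
  have hX : ∀ i, X j i = τ * b i := fun i ↦ by
    have := congrFun hP i
    simp only [Pb, Pi.zero_apply] at this
    linarith
  have hmargin : ∀ i, -(∑ k, Function.update β j 0 k * X k i) - b i * (c + β j * τ) =
      -(∑ k, β k * X k i) - b i * c := fun i ↦ by
    rw [sum_update_mul, hX i]
    ring
  have hLRP : LRP m p X b lam (Function.update β j 0) (c + β j * τ) =
      LRP m p X b lam β c - lam * |β j| := by
    simp only [LRP, hmargin, sum_abs_update, abs_zero]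
    ring
  have := hmin (Function.update β j 0) (c + β j * τ)
  rw [hLRP] at this
  exact abs_eq_zero.1 (le_antisymm (by nlinarith [abs_nonneg (β j)]) (abs_nonneg _))

end LogisticRegression

theorem slores_screening_rule_general
 (m p : ℕ) (hm : 1 ≤ m)
    (X : Fin p → Fin m → ℝ) (b : Fin m → ℝ)
    (lam lam₀ : ℝ) (hlam : 0 < lam) (hll : lam < lam₀)
    (θ₀ : Fin m → ℝ)
    (hθ₀ : θ₀ ∈ Feas m p X b lam₀ ∧ ∀ θ ∈ Feas m p X b lam₀, g m θ₀ ≤ g m θ)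
    (r : ℝ)
    (hr : r = Real.sqrt (((m : ℝ) / 2) * (g m (fun i => (lam / lam₀) * θ₀ i) - g m θ₀
      + (1 - lam / lam₀) * ∑ i, gradg m θ₀ i * θ₀ i)))
    (j₀ : Fin p)
    (xstar : Fin m → ℝ)
    (hxstar : xstar = fun i => Real.sign (∑ k, θ₀ k * X j₀ k) * X j₀ i)
    (A : Set (Fin m → ℝ))
    (hA : A = {θ | ∑ i, (θ i - θ₀ i) ^ 2 ≤ r ^ 2 ∧ ∑ i, θ i * b i = 0 ∧
      ∑ i, θ i * xstar i ≤ (m : ℝ) * lam})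
    (j : Fin p)
    (hscreen : Pb m b (X j) = 0 ∨
      sSup ((fun θ => |∑ i, θ i * X j i|) '' A) < (m : ℝ) * lam)
    (β : Fin p → ℝ) (c : ℝ)
    (hmin : ∀ β' c', LRP m p X b lam β c ≤ LRP m p X b lam β' c') :
    β j = 0 := by
  rcases hscreen with hP | hsup
  · exact eq_zero_of_Pb_eq_zero hlam hP hmin
  have hfeas := dualPoint_mem_Feas hm hlam.le hmin
  have hball : ∑ i, (dualPoint X b β c i - θ₀ i) ^ 2 ≤ r ^ 2 := by
    have h := sum_sq_sub_le_of_isMinOn hm hlam hll.le hθ₀.1 (isMinOn_iff.2 hθ₀.2) hfeas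
      (isMinOn_g_dualPoint hm hlam.le hmin)
    rwa [hr, sq_sqrt ((Finset.sum_nonneg fun i _ ↦ sq_nonneg _).trans h)]
  have hmem : dualPoint X b β c ∈ A := by
    rw [hA, hxstar]
    exact ⟨hball, hfeas.2.2, (sum_mul_sign_mul_le_abs _ _ _).trans (hfeas.2.1 j₀)⟩
  have hbdd := bddAbove_image_abs_sum_mul (A := A) (fun θ hθ ↦ by rw [hA] at hθ; exact hθ.1)
    (X j)
  exact eq_zero_of_mul_eq_abs_mul_of_abs_lt (dualPoint_kkt hm hlam.le hmin j).2
    ((le_csSup hbdd ⟨_, hmem, rfl⟩).trans_lt hsup)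

/-- Theorem 9 (Slores): for `λ_max ≥ λ₀ > λ > 0` and a feature `j`, if either
`Px̄^j = 0` or `sup_{θ ∈ A} |⟨θ, x̄^j⟩| < mλ`, then every minimizer `(β, c)` of
`LRP_λ` satisfies `β_j = 0`. -/
theorem slores_screening_rule
 (m p : ℕ) (hm : 1 ≤ m) (hp : 1 ≤ p)
    (X : Fin p → Fin m → ℝ) (b : Fin m → ℝ) (hb : ∀ i, b i = 1 ∨ b i = -1)
    (hmp : 1 ≤ mPlus m b) (hmm : 1 ≤ mMinus m b) (hlmax : 0 < lamMax m p X b)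
    (lam lam₀ : ℝ) (hlam : 0 < lam) (hll : lam < lam₀) (hle : lam₀ ≤ lamMax m p X b)
    (θ₀ : Fin m → ℝ)
    (hθ₀ : θ₀ ∈ Feas m p X b lam₀ ∧ ∀ θ ∈ Feas m p X b lam₀, g m θ₀ ≤ g m θ)
    (r : ℝ)
    (hr : r = Real.sqrt (((m : ℝ) / 2) * (g m (fun i => (lam / lam₀) * θ₀ i) - g m θ₀
      + (1 - lam / lam₀) * ∑ i, gradg m θ₀ i * θ₀ i)))
    (j₀ : Fin p) (hj₀ : |∑ i, θ₀ i * X j₀ i| = (m : ℝ) * lam₀)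
    (xstar : Fin m → ℝ)
    (hxstar : xstar = fun i => Real.sign (∑ k, θ₀ k * X j₀ k) * X j₀ i)
    (A : Set (Fin m → ℝ))
    (hA : A = {θ | ∑ i, (θ i - θ₀ i) ^ 2 ≤ r ^ 2 ∧ ∑ i, θ i * b i = 0 ∧
      ∑ i, θ i * xstar i ≤ (m : ℝ) * lam})
    (j : Fin p)
    (hscreen : Pb m b (X j) = 0 ∨
      sSup ((fun θ => |∑ i, θ i * X j i|) '' A) < (m : ℝ) * lam)
    (β : Fin p → ℝ) (c : ℝ)
    (hmin : ∀ β' c', LRP m p X b lam β c ≤ LRP m p X b lam β' c') :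
    β j = 0 :=
  slores_screening_rule_general m p hm X b lam lam₀ hlam hll θ₀ hθ₀ r hr j₀ xstar hxstar A hA j
    hscreen β c hmin
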